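/- Every F-algebra A is isomorphic to an F-twist algebra over ◇(A) via ι(a) := (◇a, ◇¬a); in particular ι(a → b) = (◇a → ◇b, ◇¬a ∨ ◇¬b) = ι(a) → ι(b). -/

import Mathlib

/-- An F-algebra: a centered Kleene algebra (distributive lattice with involutive
De Morgan negation satisfying the Kleene inequality, with center `½`) with an
implication satisfying (F1)–(F6), where `◇x := x ⊓ ½`. -/
class FAlgebra (A : Type*) extends DistribLattice A where
  neg : A → A
  half : A
  imp : A → A → A
  neg_neg : ∀ a : A, neg (neg a) = a
  neg_inf : ∀ a b : A, neg (a ⊓ b) = neg a ⊔ neg b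
  kleene : ∀ a b : A, neg a ⊓ a ≤ neg b ⊔ b
  neg_half : neg half = half
  f1 : ∀ x y : A, x ⊓ y = x ⊓ imp x y
  f2 : ∀ x y : A, imp x y ≤ (x ⊓ y) ⊔ half
  f3 : ∀ x y z : A, imp (x ⊓ y) z = imp x (imp y z)
  f4 : ∀ x y : A, half ≤ imp x (imp y y)
  f5 : ∀ x y : A, half ≤ imp (imp (imp x y) x) x
  f6 : ∀ x y : A, imp x y ⊓ half = imp (x ⊓ half) (y ⊓ half)

open FAlgebra

/-!
Kleene's inequality at `½` gives `½ ≤ ¬a ⊔ a`, so `ι a` lies in the twist universe over `◇A`.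
Since `¬` is a De Morgan involution fixing `½`, the second coordinate `◇¬a` is `¬(a ⊔ ½)`; in a
distributive lattice `a` is determined by `a ⊓ ½` and `a ⊔ ½`, whence `ι` is injective. For the
implication, the first coordinate is (F6), and (F1) with (F2) give `(a → b) ⊔ ½ = (a ⊓ b) ⊔ ½`,
which after negation is the second coordinate `◇¬a ⊔ ◇¬b`.
-/

namespace FAlgebra

variable {A : Type*} [FAlgebra A]

lemma neg_sup (a b : A) : neg (a ⊔ b) = neg a ⊓ neg b := by
  rw [← neg_neg (neg a ⊓ neg b), neg_inf, neg_neg, neg_neg]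

lemma neg_inf_half (a : A) : neg a ⊓ half = neg (a ⊔ half) := by
  rw [neg_sup, neg_half]

lemma half_le_neg_sup_self (a : A) : half ≤ neg a ⊔ a := by
  simpa only [neg_half, inf_idem] using kleene (half : A) a

lemma inf_half_sup_neg_inf_half (a : A) : a ⊓ half ⊔ neg a ⊓ half = half := by
  rw [← inf_sup_right, sup_comm]
  exact inf_eq_right.mpr (half_le_neg_sup_self a)

lemma eq_of_inf_half_eq {a b : A} (h₁ : a ⊓ half = b ⊓ half) (h₂ : neg a ⊓ half = neg b ⊓ half) :
    a = b := by
  have h₃ : a ⊔ half = b ⊔ half := by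
    rw [neg_inf_half, neg_inf_half] at h₂
    simpa only [neg_neg] using congrArg neg h₂
  exact eq_of_inf_eq_sup_eq h₁ h₃

lemma neg_inf_inf_half (a b : A) : neg (a ⊓ b) ⊓ half = neg a ⊓ half ⊔ neg b ⊓ half := by
  rw [neg_inf, inf_sup_right]

lemma inf_le_imp (a b : A) : a ⊓ b ≤ imp a b := by
  rw [f1]
  exact inf_le_right

lemma imp_sup_half (a b : A) : imp a b ⊔ half = a ⊓ b ⊔ half :=
  le_antisymm (sup_le (f2 a b) le_sup_right) (sup_le_sup_right (inf_le_imp a b) half)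

lemma neg_imp_inf_half (a b : A) : neg (imp a b) ⊓ half = neg a ⊓ half ⊔ neg b ⊓ half := by
  rw [neg_inf_half, imp_sup_half, ← neg_inf_half, neg_inf_inf_half]

end FAlgebra

/-- F-twist representation: every F-algebra `A` is isomorphic to an
F-twist algebra over `◇(A)` via `ι(a) := (◇a, ◇¬a)`: `ι` lands in the twist
universe, is injective, preserves `⊓`, `¬`, `½` and the implication:
`ι(a → b) = (◇a → ◇b, ◇¬a ⊔ ◇¬b) = ι(a) → ι(b)` for the twist implication
`(x₁,y₁) → (x₂,y₂) := (x₁ → x₂, y₁ ⊔ y₂)`. -/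
theorem f_twist_representation {A : Type*} [FAlgebra A] :
    let ι : A → A × A := fun a => (a ⊓ half, neg a ⊓ half)
    (∀ a : A, (ι a).1 ⊔ (ι a).2 = half) ∧
    Function.Injective ι ∧
    (∀ a b : A, ι (a ⊓ b) = ((ι a).1 ⊓ (ι b).1, (ι a).2 ⊔ (ι b).2)) ∧
    (∀ a : A, ι (neg a) = ((ι a).2, (ι a).1)) ∧
    ι half = (half, half) ∧
    (∀ a b : A, ι (imp a b) = (imp ((ι a).1) ((ι b).1), (ι a).2 ⊔ (ι b).2)) ∧
    Prod.fst '' Set.range ι = Set.range (fun x : A => x ⊓ half) := by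
  intro ι
  exact ⟨inf_half_sup_neg_inf_half,
    fun a b h => eq_of_inf_half_eq (congrArg Prod.fst h) (congrArg Prod.snd h),
    fun a b => Prod.ext (inf_inf_distrib_right a b half) (neg_inf_inf_half a b),
    fun a => Prod.ext rfl (congrArg (· ⊓ half) (FAlgebra.neg_neg a)),
    Prod.ext (inf_idem half) ((congrArg (· ⊓ half) neg_half).trans (inf_idem half)),
    fun a b => Prod.ext (f6 a b) (neg_imp_inf_half a b),
    (Set.range_comp _ _).symm⟩
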